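/- Let X be a real Hilbert space, let m ≥ 2, and on the Hilbert product space X^m let R be the cyclic right-shift operator and M := Id − R. Then the range of M equals the orthogonal complement Δ⊥ = {(x_1, …, x_m) ∈ X^m : Σ_{i=1}^m x_i = 0} of the diagonal subspace; in particular the range of M is closed. -/

import Mathlib

open Filter Topology RealInnerProductSpace

theorem range_M_eq_diagonal_orthogonal_complement
    {X : Type*} [NormedAddCommGroup X] [InnerProductSpace ℝ X] [CompleteSpace X]
    {m : ℕ} (hm : 2 ≤ m)
    (R M : PiLp 2 (fun _ : Fin m => X) → PiLp 2 (fun _ : Fin m => X))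
    (hR : ∀ x : PiLp 2 (fun _ : Fin m => X), ∀ i : Fin m, R x i = x (i - ⟨1, by omega⟩))
    (hM : ∀ x : PiLp 2 (fun _ : Fin m => X), M x = x - R x) :
    Set.range M = {x : PiLp 2 (fun _ : Fin m => X) | ∑ i, x i = 0} ∧
      IsClosed (Set.range M) := by
  haveI hNZ : NeZero m := ⟨by omega⟩
  have hone : (⟨1, by omega⟩ : Fin m) = 1 := by
    apply Fin.ext
    simp [Fin.val_one, Nat.mod_eq_of_lt (by omega : 1 < m)]
  have hMapp : ∀ z : PiLp 2 (fun _ : Fin m => X), ∀ i : Fin m,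
      M z i = z i - z (i - 1) := by
    intro z i
    have h1 : M z i = (z - R z) i := by rw [hM]
    have h2 : (z - R z) i = z i - R z i := rfl
    rw [h1, h2, hR, hone]
  have hv1 : ((1 : Fin m) : ℕ) = 1 := by rw [← hone]
  have hsub1 : ∀ i : Fin m, i ≠ 0 → (i - 1).val = i.val - 1 := by
    intro i hi
    have hiv : 1 ≤ i.val := by
      rcases Nat.eq_zero_or_pos i.val with h | h
      · exact absurd (Fin.ext h) hi
      · omega
    have him := i.is_lt
    rw [Fin.coe_sub, hv1]
    have : m - 1 + i.val = (i.val - 1) + m := by omega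
    rw [this, Nat.add_mod_right, Nat.mod_eq_of_lt (by omega)]
  have hsub0 : ((0 : Fin m) - 1).val = m - 1 := by
    rw [Fin.coe_sub, hv1]
    simp [Nat.mod_eq_of_lt (by omega : m - 1 < m)]
  have hrange : Set.range M = {x : PiLp 2 (fun _ : Fin m => X) | ∑ i, x i = 0} := by
    ext x
    constructor
    · rintro ⟨y, rfl⟩
      simp only [Set.mem_setOf_eq]
      calc ∑ i, M y i = ∑ i, (y i - y (i - 1)) := by
            exact Finset.sum_congr rfl (fun i _ => hMapp y i)
        _ = ∑ i, y i - ∑ i, y (i - 1) := by rw [Finset.sum_sub_distrib]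
        _ = 0 := by
            rw [← (Equiv.subRight (1 : Fin m)).sum_comp (fun i => y i)]
            simp [Equiv.subRight]
    · intro hx
      simp only [Set.mem_setOf_eq] at hx
      open Fin.NatCast in set f : ℕ → X := fun k => x ((k : Fin m)) with hf
      set y : PiLp 2 (fun _ : Fin m => X) :=
        WithLp.toLp 2 (fun (i : Fin m) => ∑ k ∈ Finset.range (i.val + 1), f k) with hy
      have hfv : ∀ i : Fin m, f i.val = x i := by
        intro i
        open Fin.NatCast in exact congrArg x (Fin.cast_val_eq_self i)
      refine ⟨y, ?_⟩
      refine PiLp.ext (fun i => ?_)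
      rw [hMapp]
      by_cases h0 : i = 0
      · subst h0
        have hy0 : y 0 = x 0 := by
          have : y 0 = f 0 := by simp [hy]
          rw [this, ← hfv 0]; simp
        have hylast : y (0 - 1) = ∑ j, x j := by
          have : y (0 - 1) = ∑ k ∈ Finset.range ((m - 1) + 1), f k := by
            simp only [hy]; rw [hsub0]
          rw [this, Nat.sub_add_cancel (by omega)]
          rw [← Fin.sum_univ_eq_sum_range f m]
          exact Finset.sum_congr rfl (fun j _ => hfv j)
        rw [hy0, hylast, hx, sub_zero]
      · have h1 : (i - 1).val = i.val - 1 := hsub1 i h0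
        have hiv : 1 ≤ i.val := by
          rcases Nat.eq_zero_or_pos i.val with h | h
          · exact absurd (Fin.ext h) h0
          · omega
        have hstep : y i = y (i - 1) + x i := by
          have e1 : y i = ∑ k ∈ Finset.range (i.val + 1), f k := by rw [hy]
          have e2 : y (i - 1) = ∑ k ∈ Finset.range (i.val - 1 + 1), f k := by
            simp only [hy]; rw [h1]
          rw [e1, e2, Nat.sub_add_cancel hiv, Finset.sum_range_succ, hfv]
        rw [hstep]; abel
  refine ⟨hrange, ?_⟩
  rw [hrange]
  have hset : {x : PiLp 2 (fun _ : Fin m => X) | ∑ i, x i = 0} =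
      (fun x : PiLp 2 (fun _ : Fin m => X) => ∑ i, x i) ⁻¹' {0} := rfl
  rw [hset]
  apply IsClosed.preimage
  · exact continuous_finset_sum _ (fun i _ =>
      (continuous_apply i).comp (PiLp.continuousLinearEquiv 2 ℝ (fun _ : Fin m => X)).continuous)
  · exact isClosed_singleton
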